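/- arXiv:1101.5621 — 2 statements merged into one kernel-verified Lean document; each statement's English description precedes it below -/
import Mathlib

section
/- Let (X_i)_{i∈I} be a nested family of subsets of the ground set of a matroid M (X_i ⊆ X_j whenever i ≥ j) with κ(X_i) ≤ k for all i. Then κ(⋂_{i∈I} X_i) ≤ k. -/
open Set Matroid

variable {α : Type*}

/-- A circuit of a (possibly infinite) matroid: a minimal dependent set. -/
def Circuit (M : Matroid α) (C : Set α) : Prop :=
  M.Dep C ∧ ∀ C' ⊂ C, ¬ M.Dep C'

/-- A cocircuit: a circuit of the dual matroid. -/
def Cocircuit (M : Matroid α) (D : Set α) : Prop :=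
  Circuit M✶ D

/-- Deletion of the set `D` from the matroid `M`. -/
def delete (M : Matroid α) (D : Set α) : Matroid α :=
  M ↾ (M.E \ D)

/-- Contraction of the set `C` in the matroid `M`, i.e. `M/C = (M✶ − C)✶`. -/
def contract (M : Matroid α) (C : Set α) : Matroid α :=
  (_root_.delete M✶ C)✶

/-- `del M I J` : the minimum cardinality of a finite `F ⊆ I ∪ J` with
`(I ∪ J) \ F` independent in `M`, or `∞` if no such finite set exists. -/
noncomputable def del (M : Matroid α) (I J : Set α) : ℕ∞ :=
  sInf {n : ℕ∞ | ∃ F : Set α, F.Finite ∧ F ⊆ I ∪ J ∧ M.Indep ((I ∪ J) \ F) ∧ n = F.encard}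

/-- The connectivity function `κ_M(X)`, defined via `del` on bases of `M|X`
and `M|(E \ X)` (its value does not depend on the choice of bases). -/
noncomputable def conn (M : Matroid α) (X : Set α) : ℕ∞ :=
  ⨅ B ∈ {B | (M ↾ X).IsBase B}, ⨅ B' ∈ {B' | (M ↾ (M.E \ X)).IsBase B'}, del M B B'

/-- `κ_M(X,Y) = min {κ_M(U) : X ⊆ U ⊆ E(M) \ Y}`. -/
noncomputable def connBtw (M : Matroid α) (X Y : Set α) : ℕ∞ :=
  ⨅ U ∈ {U | X ⊆ U ∧ U ⊆ M.E \ Y}, conn M U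

/-- `x ~ y` iff `x = y` or some circuit contains both `x` and `y`. -/
def ConnRel (M : Matroid α) (x y : α) : Prop :=
  x = y ∨ ∃ C, Circuit M C ∧ x ∈ C ∧ y ∈ C

/-! Write `nullity M S` for `|S \ J|`, `J` a basis of `S`. Since `(M ／ X)` does not see which
basis of `X` was chosen, `κ(X) = nullity M (B ∪ C)` for *all* bases `B` of `X` and `C` of
`E \ X`. For `Y = ⋂ j, X j`, take bases `B` of `Y`, `C` of `E \ Y` and a basis `J ⊇ B` of
`B ∪ C`. If `κ(Y) > k`, then `C \ J` contains a set `xs` of `k + 1` elements; being finite and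
disjoint from `Y`, it misses a single `X j` of the chain. Bases of `X j` and of `E \ X j` can
then be chosen to cover the set `J ∪ xs`, whose nullity is `k + 1`, so `κ(X j) > k`. -/

/-- `|S \ J|` for any basis `J` of `S`. -/
noncomputable def nullity (M : Matroid α) (S : Set α) : ℕ∞ :=
  (M ↾ S)✶.eRank

section

variable {M : Matroid α} {B C J S T X : Set α}

lemma Matroid.IsBasis'.encard_sdiff_eq_nullity (hJ : M.IsBasis' J S) :
    (S \ J).encard = nullity M S :=
  (isBase_restrict_iff'.2 hJ).encard_compl_eq

lemma Matroid.IsBasis.encard_sdiff_eq_nullity (hJ : M.IsBasis J S) :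
    (S \ J).encard = nullity M S :=
  hJ.isBasis'.encard_sdiff_eq_nullity

lemma nullity_mono (hST : S ⊆ T) : nullity M S ≤ nullity M T := by
  obtain ⟨J, hJ⟩ := M.exists_isBasis' S
  obtain ⟨J', hJ', hJJ'⟩ := hJ.indep.subset_isBasis'_of_subset (hJ.subset.trans hST)
  rw [← hJ.encard_sdiff_eq_nullity, ← hJ'.encard_sdiff_eq_nullity]
  refine encard_mono fun x hx ↦ ⟨hST hx.1, fun hxJ' ↦ hx.2 ?_⟩
  rw [← hJ.inter_eq_of_subset_indep hJJ' hJ'.indep]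
  exact ⟨hxJ', hx.1⟩

lemma del_eq_nullity (M : Matroid α) (B C : Set α) : del M B C = nullity M (B ∪ C) := by
  obtain ⟨J, hJ⟩ := M.exists_isBasis' (B ∪ C)
  refine le_antisymm ?_ (le_sInf ?_)
  · rw [← hJ.encard_sdiff_eq_nullity]
    by_cases hfin : ((B ∪ C) \ J).Finite
    · refine sInf_le ⟨_, hfin, sdiff_subset, ?_, rfl⟩
      rw [sdiff_sdiff_cancel_left hJ.subset]
      exact hJ.indep
    · simp [Set.Infinite.encard_eq hfin]
  · rintro _ ⟨F, -, -, hF, rfl⟩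
    obtain ⟨J', hJ', hFJ'⟩ := hF.subset_isBasis'_of_subset sdiff_subset
    rw [← hJ'.encard_sdiff_eq_nullity]
    exact encard_mono fun x hx ↦ by_contra fun hxF ↦ hx.2 (hFJ' ⟨hx.1, hxF⟩)

lemma Matroid.IsBasis.nullity_union_eq_nullity_contract (hB : M.IsBasis B X)
    (hC : C ⊆ M.E) (hCX : Disjoint C X) : nullity M (C ∪ B) = nullity (M ／ X) C := by
  obtain ⟨K, hK⟩ := (M ／ X).exists_isBasis C (subset_sdiff.2 ⟨hC, hCX⟩)
  have hKB : (M ／ B).IsBasis K C := by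
    rw [hB.contract_eq_contract_delete, delete_isBasis_iff] at hK
    exact hK.1
  rw [← hK.encard_sdiff_eq_nullity,
    ← (hB.indep.union_isBasis_union_of_contract_isBasis hKB).encard_sdiff_eq_nullity]
  have hCB := disjoint_left.1 (hCX.mono_right hB.subset)
  congr 1
  ext x
  simp only [mem_sdiff, mem_union]
  have := @hCB x
  tauto

lemma conn_eq_nullity (hB : M.IsBasis B X) (hC : M.IsBasis C (M.E \ X)) :
    conn M X = nullity M (B ∪ C) := by
  have hX : X ⊆ M.E := hB.subset_ground
  refine le_antisymm (iInf₂_le_of_le B ((isBase_restrict_iff hX).2 hB)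
    (iInf₂_le_of_le C ((isBase_restrict_iff sdiff_subset).2 hC) (del_eq_nullity M B C).le)) ?_
  refine le_iInf₂ fun B' hB' ↦ le_iInf₂ fun C' hC' ↦ ?_
  rw [mem_ofPred_eq, isBase_restrict_iff hX] at hB'
  rw [mem_ofPred_eq, isBase_restrict_iff sdiff_subset] at hC'
  have hCX : Disjoint C X := disjoint_sdiff_left.mono_left hC.subset
  have hB'X : Disjoint B' (M.E \ X) := disjoint_sdiff_right.mono_left hB'.subset
  have hCE := hC.indep.subset_ground
  have hB'E := hB'.indep.subset_ground
  have hswapB : nullity M (C ∪ B) = nullity M (C ∪ B') := by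
    rw [hB.nullity_union_eq_nullity_contract hCE hCX,
      hB'.nullity_union_eq_nullity_contract hCE hCX]
  have hswapC : nullity M (B' ∪ C) = nullity M (B' ∪ C') := by
    rw [hC.nullity_union_eq_nullity_contract hB'E hB'X,
      hC'.nullity_union_eq_nullity_contract hB'E hB'X]
  rw [del_eq_nullity, union_comm B, hswapB, union_comm, hswapC]

lemma nullity_le_conn {P Q : Set α} (hX : X ⊆ M.E) (hP : M.Indep P) (hQ : M.Indep Q)
    (hPX : P ⊆ X) (hQX : Q ⊆ M.E \ X) : nullity M (P ∪ Q) ≤ conn M X := by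
  obtain ⟨B, hB, hPB⟩ := hP.subset_isBasis_of_subset hPX
  obtain ⟨C, hC, hQC⟩ := hQ.subset_isBasis_of_subset hQX
  rw [conn_eq_nullity hB hC]
  exact nullity_mono (union_subset_union hPB hQC)

end

lemma Set.Finite.exists_disjoint_of_disjoint_iInter {ι : Type*} [Nonempty ι] {X : ι → Set α}
    (hX : Directed (· ⊇ ·) X) {s : Set α} (hs : s.Finite) (hsX : Disjoint s (⋂ j, X j)) :
    ∃ j, Disjoint s (X j) := by
  have hcompl : Directed (· ⊆ ·) fun j ↦ (X j)ᶜ :=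
    hX.mono_comp (· ⊇ ·) fun _ _ h ↦ compl_subset_compl.2 h
  have hsub : ((hs.toFinset : Finset α) : Set α) ⊆ ⋃ j, (X j)ᶜ := by
    rw [hs.coe_toFinset, ← compl_iInter]
    exact subset_compl_iff_disjoint_right.2 hsX
  obtain ⟨j, hj⟩ := hcompl.exists_mem_subset_of_finset_subset_biUnion hsub
  exact ⟨j, subset_compl_iff_disjoint_right.1 (hs.coe_toFinset ▸ hj)⟩

theorem stmt16 (M : Matroid α) {i : Type*} [Nonempty i] (X : i → Set α)
    (hE : ∀ j, X j ⊆ M.E) (hnested : ∀ j l, X j ⊆ X l ∨ X l ⊆ X j)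
    (k : ℕ) (hk : ∀ j, conn M (X j) ≤ (k : ℕ∞)) :
    conn M (⋂ j, X j) ≤ (k : ℕ∞) := by
  set Y := ⋂ j, X j
  have hYE : Y ⊆ M.E := (iInter_subset X (Classical.arbitrary i)).trans (hE _)
  obtain ⟨B, hB⟩ := M.exists_isBasis Y
  obtain ⟨C, hC⟩ := M.exists_isBasis (M.E \ Y)
  obtain ⟨J, hJ, hBJ⟩ := hB.indep.subset_isBasis_of_subset (subset_union_left (t := C))
  rw [conn_eq_nullity hB hC, ← hJ.encard_sdiff_eq_nullity]
  by_contra! hlt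
  obtain ⟨xs, hxs, hxs_card⟩ := exists_subset_encard_eq (Order.add_one_le_of_lt hlt)
  have hxsJ : Disjoint xs J := disjoint_sdiff_left.mono_left hxs
  have hxsC : xs ⊆ C := fun x hx ↦ (hxs hx).1.resolve_left fun hxB ↦ (hxs hx).2 (hBJ hxB)
  have hxs_fin : xs.Finite := finite_of_encard_eq_coe (k := k + 1) (by rw [hxs_card]; norm_cast)
  have hchain : Directed (· ⊇ ·) X := fun j l ↦
    (hnested j l).elim (fun h ↦ ⟨j, subset_rfl, h⟩) fun h ↦ ⟨l, h, subset_rfl⟩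
  obtain ⟨j, hj⟩ := hxs_fin.exists_disjoint_of_disjoint_iInter hchain
    (disjoint_sdiff_left.mono_left (hxsC.trans hC.subset))
  have hJC : J \ X j ∪ xs ⊆ C := union_subset (fun x hx ↦ (hJ.subset hx.1).resolve_left
    fun hxB ↦ hx.2 (iInter_subset X j (hB.subset hxB))) hxsC
  have hJX : J \ X j ∪ xs ⊆ M.E \ X j := subset_sdiff.2
    ⟨hJC.trans hC.indep.subset_ground, disjoint_union_left.2 ⟨disjoint_sdiff_left, hj⟩⟩
  have hnullity : nullity M (J ∪ xs) = xs.encard := by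
    rw [← (hJ.isBasis_subset subset_union_left (union_subset hJ.subset
      (hxs.trans sdiff_subset))).encard_sdiff_eq_nullity, union_sdiff_left, hxsJ.sdiff_eq_left]
  have hle : (k : ℕ∞) + 1 ≤ k := calc
    (k : ℕ∞) + 1 = nullity M (J ∩ X j ∪ (J \ X j ∪ xs)) := by
      rw [← union_assoc, inter_union_sdiff, hnullity, hxs_card]
    _ ≤ conn M (X j) := nullity_le_conn (hE j) (hJ.indep.subset inter_subset_left)
      (hC.indep.subset hJC) inter_subset_right hJX
    _ ≤ k := hk j
  exact (ENat.add_one_le_iff (ENat.natCast_ne_top k)).1 hle |>.false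
end

section
/- Let X, Y be disjoint subsets of the ground set of a matroid M and X' ⊆ X, Y' ⊆ Y with κ(X', Y') = k − 1. Then κ(X, Y) ≥ k if and only if there exist x ∈ X and y ∈ Y with κ(X' + x, Y' + y) = k. -/
open Set Matroid

variable {α : Type*}

/-! `conn M U` is the nullity of `B ∪ B'` for any bases `B` of `U` and `B'` of `E \ U`. This
independence of the choice of bases makes `conn` invariant under complementation and submodular
(exchange two bases of `E \ (V \ U)` inside bases adapted to `U` and to `V`), and keeps
`conn ≤ c` along unions of chains, since a finite witness of `c < conn` lies in one member.
By Zorn's lemma and submodularity, if no single `x ∈ X` raises `κ(A, Y)`, then neither does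
adding all of `X`. Hence from `κ(X', Y') = k - 1` and `κ(X, Y) ≥ k` one finds first `y ∈ Y` with
`κ(X, Y' + y) ≥ k`, then `x ∈ X` with `κ(X' + x, Y' + y) = k`; adding one element raises `κ` by
at most one, which pins the value at `k`. -/

section

variable {M : Matroid α} {A B B' I J K S T U V W W' X Y X' Y' : Set α}

lemma encard_sdiff_eq_of_isBasis' (hW : M.IsBasis' W S) (hW' : M.IsBasis' W' S) :
    (S \ W).encard = (S \ W').encard := by
  have split : ∀ {W W'}, M.IsBasis' W' S →
      (S \ W).encard = (S \ (W ∪ W')).encard + (W' \ W).encard := fun {W W'} h ↦ by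
    rw [← encard_union_eq (disjoint_sdiff_left.mono_right (sdiff_subset.trans subset_union_right))]
    have hW'S := h.subset
    congr 1
    tauto_set
  rw [split (W := W) hW', split (W := W') hW, union_comm W',
    (isBase_restrict_iff'.2 hW').encard_sdiff_comm (isBase_restrict_iff'.2 hW)]

lemma del_eq_encard_sdiff (hW : M.IsBasis' W (I ∪ J)) : del M I J = ((I ∪ J) \ W).encard := by
  refine le_antisymm ?_ (le_sInf ?_)
  · rcases ((I ∪ J) \ W).finite_or_infinite with hfin | hinf
    · refine sInf_le ⟨(I ∪ J) \ W, hfin, sdiff_subset, ?_, rfl⟩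
      rw [sdiff_sdiff_right_self, inter_eq_self_of_subset_right hW.subset]
      exact hW.indep
    · simp [hinf.encard_eq]
  · rintro n ⟨F, -, -, hind, rfl⟩
    obtain ⟨W', hW', hFW'⟩ := hind.subset_isBasis'_of_subset sdiff_subset
    rw [encard_sdiff_eq_of_isBasis' hW hW']
    exact encard_mono fun a ha ↦ by_contra fun haF ↦ ha.2 (hFW' ⟨ha.1, haF⟩)

lemma del_le_encard_sdiff (hW : M.Indep W) : del M I J ≤ ((I ∪ J) \ W).encard := by
  obtain ⟨W', hW', hWW'⟩ := (hW.inter_right (I ∪ J)).subset_isBasis'_of_subset inter_subset_right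
  rw [del_eq_encard_sdiff hW']
  exact encard_mono fun a ha ↦ ⟨ha.1, fun haW ↦ ha.2 (hWW' ⟨haW, ha.1⟩)⟩

lemma encard_sdiff_le_del (hT : M.IsBasis' T S) (hS : S ⊆ I ∪ J) :
    (S \ T).encard ≤ del M I J := by
  obtain ⟨W, hW, hTW⟩ := hT.indep.subset_isBasis'_of_subset (hT.subset.trans hS)
  rw [del_eq_encard_sdiff hW]
  exact encard_mono fun a ha ↦ ⟨hS ha.1, fun haW ↦
    ha.2 (hT.mem_of_insert_indep ha.1 (hW.indep.subset (insert_subset haW hTW)))⟩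

lemma del_comm (M : Matroid α) (I J : Set α) : del M I J = del M J I := by
  rw [del, del, union_comm]

lemma del_eq_encard_sdiff_of_contract (hJ : M.IsBasis' J S) (hK : (M ／ S).IsBasis' K I)
    (hIS : Disjoint I S) : del M I J = (I \ K).encard := by
  have hIJ : Disjoint I J := hIS.mono_right hJ.subset
  obtain ⟨W, hW, hKJW⟩ := (hJ.contract_indep_iff.1 hK.indep).1.subset_isBasis'_of_subset
    (union_subset_union_left J hK.subset)
  have hJW : J ⊆ W := subset_union_right.trans hKJW
  have hWJ : W \ J ⊆ I := fun a ha ↦ (hW.subset ha.1).resolve_right ha.2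
  have hK_eq : K = W \ J := by
    refine hK.eq_of_subset_indep ?_ (subset_sdiff.2 ⟨subset_union_left.trans hKJW,
      (hIJ.mono_left hK.subset)⟩) hWJ
    rw [hJ.contract_indep_iff, sdiff_union_of_subset hJW]
    exact ⟨hW.indep, (hIS.mono_left hWJ).symm⟩
  rw [del_eq_encard_sdiff hW, hK_eq]
  congr 1
  tauto_set

lemma del_congr_right {J₁ J₂ : Set α} (hJ₁ : M.IsBasis' J₁ S) (hJ₂ : M.IsBasis' J₂ S)
    (hIS : Disjoint I S) : del M I J₁ = del M I J₂ := by
  obtain ⟨K, hK⟩ := (M ／ S).exists_isBasis' I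
  rw [del_eq_encard_sdiff_of_contract hJ₁ hK hIS, del_eq_encard_sdiff_of_contract hJ₂ hK hIS]

lemma conn_eq_del (hB : M.IsBasis' B U) (hB' : M.IsBasis' B' (M.E \ U)) :
    conn M U = del M B B' := by
  have hconst : ∀ B₁ B₁', M.IsBasis' B₁ U → M.IsBasis' B₁' (M.E \ U) →
      del M B₁ B₁' = del M B B' := fun B₁ B₁' h₁ h₁' ↦ by
    rw [del_congr_right h₁' hB' (disjoint_sdiff_right.mono_left h₁.subset), del_comm,
      del_congr_right h₁ hB (disjoint_sdiff_left.mono_left hB'.subset), del_comm]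
  refine le_antisymm (iInf₂_le_of_le B (isBase_restrict_iff'.2 hB)
    (iInf₂_le B' (isBase_restrict_iff'.2 hB'))) ?_
  exact le_iInf₂ fun B₁ h₁ ↦ le_iInf₂ fun B₁' h₁' ↦
    (hconst _ _ (isBase_restrict_iff'.1 h₁) (isBase_restrict_iff'.1 h₁')).ge

lemma conn_compl (hU : U ⊆ M.E) : conn M (M.E \ U) = conn M U := by
  obtain ⟨B, hB⟩ := M.exists_isBasis' U
  obtain ⟨B', hB'⟩ := M.exists_isBasis' (M.E \ U)
  rw [conn_eq_del hB hB', conn_eq_del hB' (by rwa [sdiff_sdiff_cancel_left hU]), del_comm]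

lemma conn_le_encard (M : Matroid α) (U : Set α) : conn M U ≤ U.encard := by
  obtain ⟨B, hB⟩ := M.exists_isBasis' U
  obtain ⟨B', hB'⟩ := M.exists_isBasis' (M.E \ U)
  rw [conn_eq_del hB hB']
  refine (del_le_encard_sdiff hB'.indep).trans (encard_mono ?_)
  rw [union_sdiff_right]
  exact sdiff_subset.trans hB.subset

lemma isBasis'_union_of_isBasis'_union (hI : M.IsBasis' I X)
    (hJ : M.IsBasis' J Y) (hW : M.IsBasis' W (I ∪ J)) (hXY : X ∪ Y ⊆ M.E) :
    M.IsBasis' W (X ∪ Y) := by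
  have hcl : M.closure (I ∪ J) = M.closure (X ∪ Y) := by
    rw [closure_union_congr_left hI.closure_eq_closure,
      closure_union_congr_right hJ.closure_eq_closure]
  refine (hW.isBasis_closure_right.isBasis_subset
    (hW.subset.trans (union_subset_union hI.subset hJ.subset)) ?_).isBasis'
  exact hcl ▸ M.subset_closure _ hXY

lemma indep_union_sdiff_of_closure_eq {Q Q' : Set α} (hQ : M.Indep Q) (hQ' : M.Indep Q')
    (hcl : M.closure Q = M.closure Q') (hT : M.Indep T) (hQT : Q ⊆ T) :
    M.Indep (Q' ∪ (T \ Q)) := by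
  have hQb : M.IsBasis' Q (M.closure Q) := hQ.isBasis_closure.isBasis'
  have hQ'b : M.IsBasis' Q' (M.closure Q) := hcl ▸ hQ'.isBasis_closure.isBasis'
  have hTQ : T ∩ M.closure Q = Q := hQb.inter_eq_of_subset_indep hQT hT
  have hcon : (M ／ M.closure Q).Indep (T \ Q) := by
    refine hQb.contract_indep_iff.2 ⟨by rwa [sdiff_union_of_subset hQT], ?_⟩
    exact disjoint_left.2 fun a haQ haT ↦ haT.2 (hTQ.subset ⟨haT.1, haQ⟩)
  rw [union_comm]
  exact (hQ'b.contract_indep_iff.1 hcon).1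

lemma del_eq_encard_add_encard {P C L Q : Set α} (hQ : M.IsBasis' Q (P ∪ L)) (hPQ : P ⊆ Q)
    (hT : M.IsBasis' T (P ∪ C)) (hQT : Q ⊆ T) (hLC : L ⊆ C) :
    del M P C = (L \ Q).encard + ((C \ L) \ T).encard := by
  have hTQ : T ∩ (P ∪ L) = Q := hQ.inter_eq_of_subset_indep hQT hT.indep
  have hLT : L \ T = L \ Q := by rw [← hTQ]; tauto_set
  have hPT : P ⊆ T := hPQ.trans hQT
  rw [del_eq_encard_sdiff hT, ← hLT, ← encard_union_eq (by tauto_set)]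
  congr 1
  tauto_set

lemma del_le_encard_add_encard {D P R N C L Q₁ Q₂ : Set α} (hQ₁ : M.Indep Q₁) (hQ₂ : M.Indep Q₂)
    (hcl : M.closure Q₁ = M.closure Q₂) (hT : M.Indep T) (hQ₂T : Q₂ ⊆ T) (hPQ₁ : P ⊆ Q₁)
    (hDPR : D ⊆ P ∪ R) (hNP : N ⊆ P) (hQ₂CN : Q₂ ⊆ C ∪ N) (hRC : Disjoint R C) :
    del M D L ≤ ((R \ N) \ T).encard + (L \ Q₁).encard := by
  refine (del_le_encard_sdiff (indep_union_sdiff_of_closure_eq hQ₂ hQ₁ hcl.symm hT hQ₂T)).trans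
    ((encard_mono ?_).trans (encard_union_le _ _))
  rintro a ⟨haD | haL, ha⟩
  · have haP : a ∉ P := fun h ↦ ha (Or.inl (hPQ₁ h))
    have haR : a ∈ R := (hDPR haD).resolve_left haP
    refine Or.inl ⟨⟨haR, fun h ↦ haP (hNP h)⟩, fun haT ↦ ?_⟩
    have haQ₂ : a ∈ Q₂ := by_contra fun h ↦ ha (Or.inr ⟨haT, h⟩)
    exact (hQ₂CN haQ₂).elim (fun h ↦ hRC.ne_of_mem haR h rfl) (fun h ↦ haP (hNP h))
  · exact Or.inr ⟨haL, fun h ↦ ha (Or.inl h)⟩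

lemma conn_union_add_conn_inter_le (hU : U ⊆ M.E) (hV : V ⊆ M.E) :
    conn M (U ∪ V) + conn M (U ∩ V) ≤ conn M U + conn M V := by
  have hsets : U ∪ (M.E \ (U ∪ V)) = (M.E \ V) ∪ (U ∩ V) := by tauto_set
  obtain ⟨K, hK⟩ := M.exists_isBasis' (U ∩ V)
  obtain ⟨BU, hBU, hKBU⟩ := hK.indep.subset_isBasis'_of_subset (hK.subset.trans inter_subset_left)
  obtain ⟨BV, hBV, hKBV⟩ := hK.indep.subset_isBasis'_of_subset (hK.subset.trans inter_subset_right)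
  obtain ⟨K', hK'⟩ := M.exists_isBasis' (M.E \ (U ∪ V))
  obtain ⟨CU, hCU, hK'CU⟩ := hK'.indep.subset_isBasis'_of_subset
    (hK'.subset.trans (sdiff_subset_sdiff_right subset_union_left))
  obtain ⟨CV, hCV, hK'CV⟩ := hK'.indep.subset_isBasis'_of_subset
    (hK'.subset.trans (sdiff_subset_sdiff_right subset_union_right))
  obtain ⟨Q₁, hQ₁, hBUQ₁⟩ := hBU.indep.subset_isBasis'_of_subset (subset_union_left (t := K'))
  obtain ⟨Q₂, hQ₂, hCVQ₂⟩ := hCV.indep.subset_isBasis'_of_subset (subset_union_left (t := K))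
  obtain ⟨TU, hTU, hQ₁TU⟩ := hQ₁.indep.subset_isBasis'_of_subset
    (hQ₁.subset.trans (union_subset_union_right _ hK'CU))
  obtain ⟨TV, hTV, hQ₂TV⟩ := hQ₂.indep.subset_isBasis'_of_subset
    (hQ₂.subset.trans (union_subset_union_right _ hKBV))
  obtain ⟨BD, hBD⟩ := M.exists_isBasis' (BU ∪ BV)
  obtain ⟨CA, hCA⟩ := M.exists_isBasis' (CU ∪ CV)
  -- `Q₁` and `Q₂` both span `E \ (V \ U)`, so each may replace the other inside `TV` resp. `TU`.
  have hcl : M.closure Q₁ = M.closure Q₂ := by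
    rw [hQ₁.closure_eq_closure, hQ₂.closure_eq_closure,
      closure_union_congr_left hBU.closure_eq_closure,
      closure_union_congr_right hK'.closure_eq_closure,
      closure_union_congr_left hCV.closure_eq_closure,
      closure_union_congr_right hK.closure_eq_closure, hsets]
  have hUV : conn M (U ∪ V) ≤ ((BV \ K) \ TV).encard + (K' \ Q₁).encard := by
    rw [conn_eq_del (isBasis'_union_of_isBasis'_union hBU hBV hBD (union_subset hU hV)) hK']
    exact del_le_encard_add_encard hQ₁.indep hQ₂.indep hcl hTV.indep hQ₂TV hBUQ₁ hBD.subset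
      hKBU hQ₂.subset (disjoint_sdiff_right.mono hBV.subset hCV.subset)
  have hUiV : conn M (U ∩ V) ≤ ((CU \ K') \ TU).encard + (K \ Q₂).encard := by
    have hCA' : M.IsBasis' CA (M.E \ (U ∩ V)) := by
      rw [sdiff_inter]
      exact isBasis'_union_of_isBasis'_union hCU hCV hCA
        (union_subset sdiff_subset sdiff_subset)
    rw [conn_eq_del hK hCA', del_comm]
    exact del_le_encard_add_encard hQ₂.indep hQ₁.indep hcl.symm hTU.indep hQ₁TU hCVQ₂
      (hCA.subset.trans_eq (union_comm _ _)) hK'CV hQ₁.subset (disjoint_sdiff_right.mono hBU.subset hCU.subset).symm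
  rw [conn_eq_del hBU hCU, del_eq_encard_add_encard hQ₁ hBUQ₁ hTU hQ₁TU hK'CU,
    conn_eq_del hBV hCV, del_comm, del_eq_encard_add_encard hQ₂ hCVQ₂ hTV hQ₂TV hKBV]
  exact (add_le_add hUV hUiV).trans_eq (by ring)

lemma conn_insert_le {e : α} (hU : U ⊆ M.E) (he : e ∈ M.E) :
    conn M (insert e U) ≤ conn M U + 1 := by
  have hsub := conn_union_add_conn_inter_le hU (singleton_subset_iff.2 he)
  rw [union_singleton] at hsub
  calc conn M (insert e U) ≤ conn M (insert e U) + conn M (U ∩ {e}) := le_self_add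
    _ ≤ conn M U + conn M {e} := hsub
    _ ≤ conn M U + 1 := by gcongr; simpa using conn_le_encard M {e}

lemma conn_sUnion_le {c : ℕ∞} (hc : c ≠ ⊤) {𝒞 : Set (Set α)} (hne : 𝒞.Nonempty)
    (hch : IsChain (· ⊆ ·) 𝒞) (h𝒞 : ∀ W ∈ 𝒞, conn M W ≤ c) : conn M (⋃₀ 𝒞) ≤ c := by
  obtain ⟨B, hB⟩ := M.exists_isBasis' (⋃₀ 𝒞)
  obtain ⟨B', hB'⟩ := M.exists_isBasis' (M.E \ ⋃₀ 𝒞)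
  obtain ⟨T, hT, hB'T⟩ := hB'.indep.subset_isBasis'_of_subset (subset_union_right (s := B))
  have hconn : conn M (⋃₀ 𝒞) = (B \ T).encard := by
    rw [conn_eq_del hB hB', del_eq_encard_sdiff hT]
    congr 1
    tauto_set
  by_contra! hlt
  rw [hconn] at hlt
  obtain ⟨X₀, hX₀, hX₀c⟩ := exists_subset_encard_eq ((ENat.add_one_le_iff hc).2 hlt)
  have hX₀fin : X₀.Finite := encard_lt_top_iff.1 (hX₀c ▸ by simpa using hc.lt_top)
  obtain ⟨W, hW𝒞, hX₀W⟩ := hch.directedOn.exists_mem_subset_of_finite_of_subset_sUnion hne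
    hX₀fin (hX₀.trans (sdiff_subset.trans hB.subset))
  obtain ⟨BW, hBW, hBBW⟩ := (hB.indep.inter_right W).subset_isBasis'_of_subset inter_subset_right
  obtain ⟨BW', hBW', hTBW'⟩ := (hT.indep.subset (sdiff_subset (t := W))).subset_isBasis'_of_subset
    (sdiff_subset_sdiff_left hT.indep.subset_ground)
  have hTX₀ : M.IsBasis' T (T ∪ X₀) := hT.mono (fun I hI ↦ ⟨hI.1, hI.2.trans
    (union_subset hT.subset (hX₀.trans (sdiff_subset.trans subset_union_left)))⟩)
    ⟨hT.indep, subset_union_left⟩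
  have hB'W : Disjoint B' W :=
    disjoint_sdiff_left.mono hB'.subset (subset_sUnion_of_mem hW𝒞)
  have hcover : T ∪ X₀ ⊆ BW ∪ BW' := by
    rintro a (haT | haX₀)
    · by_cases haW : a ∈ W
      · refine Or.inl (hBBW ⟨(hT.subset haT).resolve_right fun haB' ↦ ?_, haW⟩)
        exact hB'W.ne_of_mem haB' haW rfl
      · exact Or.inr (hTBW' ⟨haT, haW⟩)
    · exact Or.inl (hBBW ⟨(hX₀ haX₀).1, hX₀W haX₀⟩)
  have hle := (encard_sdiff_le_del hTX₀ hcover).trans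
    ((conn_eq_del hBW hBW').symm.trans_le (h𝒞 W hW𝒞))
  rw [union_sdiff_left, (disjoint_sdiff_left.mono_left hX₀).sdiff_eq_left, hX₀c] at hle
  exact (ENat.add_one_le_iff hc).1 hle |>.false

lemma connBtw_le_conn (hXU : X ⊆ U) (hUY : U ⊆ M.E \ Y) :
    connBtw M X Y ≤ conn M U :=
  iInf₂_le U ⟨hXU, hUY⟩

lemma connBtw_mono (hX : X ⊆ X') (hY : Y ⊆ Y') :
    connBtw M X Y ≤ connBtw M X' Y' :=
  le_iInf₂ fun _ hU ↦ connBtw_le_conn (hX.trans hU.1) (hU.2.trans (sdiff_subset_sdiff_right hY))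

lemma exists_conn_eq_connBtw (hX : X ⊆ M.E) (hXY : Disjoint X Y) :
    ∃ U, X ⊆ U ∧ U ⊆ M.E \ Y ∧ conn M U = connBtw M X Y := by
  have : Nonempty {U // X ⊆ U ∧ U ⊆ M.E \ Y} := ⟨⟨X, subset_rfl, subset_sdiff.2 ⟨hX, hXY⟩⟩⟩
  obtain ⟨⟨U, hU⟩, h⟩ := ENat.exists_eq_iInf fun U : {U // X ⊆ U ∧ U ⊆ M.E \ Y} ↦ conn M U
  exact ⟨U, hU.1, hU.2, h.trans (by rw [connBtw, iInf_subtype']; rfl)⟩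

lemma connBtw_comm (hX : X ⊆ M.E) (hY : Y ⊆ M.E) :
    connBtw M X Y = connBtw M Y X := by
  have hle : ∀ {X Y : Set α}, X ⊆ M.E → connBtw M X Y ≤ connBtw M Y X := fun hX ↦
    le_iInf₂ fun U hU ↦ (connBtw_le_conn (subset_sdiff.2 ⟨hX, (subset_sdiff.1 hU.2).2.symm⟩)
      (sdiff_subset_sdiff_right hU.1)).trans_eq (conn_compl (hU.2.trans sdiff_subset))
  exact (hle hX).antisymm (hle hY)

lemma Set.Nonempty.of_connBtw_ne_zero (h : connBtw M X Y ≠ 0) : X.Nonempty := by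
  refine nonempty_iff_ne_empty.2 fun hX ↦ h (nonpos_iff_eq_zero.1 ?_)
  simpa [hX] using (connBtw_le_conn (M := M) (Y := Y) subset_rfl (empty_subset _)).trans
    (conn_le_encard M ∅)

lemma connBtw_insert_left_le {e : α} (hX : X ⊆ M.E) (hXY : Disjoint X Y)
    (he : e ∈ M.E) (heY : e ∉ Y) : connBtw M (insert e X) Y ≤ connBtw M X Y + 1 := by
  obtain ⟨U, hXU, hUY, hU⟩ := exists_conn_eq_connBtw hX hXY
  calc connBtw M (insert e X) Y ≤ conn M (insert e U) :=
        connBtw_le_conn (insert_subset_insert hXU) (insert_subset ⟨he, heY⟩ hUY)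
    _ ≤ conn M U + 1 := conn_insert_le (hUY.trans sdiff_subset) he
    _ = connBtw M X Y + 1 := by rw [hU]

lemma connBtw_insert_right_le {e : α} (hX : X ⊆ M.E) (hY : Y ⊆ M.E)
    (hXY : Disjoint X Y) (he : e ∈ M.E) (heX : e ∉ X) :
    connBtw M X (insert e Y) ≤ connBtw M X Y + 1 := by
  rw [connBtw_comm hX (insert_subset he hY), connBtw_comm hX hY]
  exact connBtw_insert_left_le hY hXY.symm he heX

lemma connBtw_le_of_forall_insert_le (hAX : A ⊆ X) (hX : X ⊆ M.E)
    (hXY : Disjoint X Y) (hA : connBtw M A Y ≠ ⊤)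
    (hins : ∀ x ∈ X, connBtw M (insert x A) Y ≤ connBtw M A Y) :
    connBtw M X Y ≤ connBtw M A Y := by
  set c := connBtw M A Y
  obtain ⟨U₀, hAU₀, hU₀Y, hU₀⟩ := exists_conn_eq_connBtw (hAX.trans hX) (hXY.mono_left hAX)
  obtain ⟨U, -, hU⟩ := zorn_subset_nonempty {U | A ⊆ U ∧ U ⊆ M.E \ Y ∧ conn M U ≤ c}
    (fun 𝒞 h𝒞 hch hne ↦ ⟨⋃₀ 𝒞, ⟨hne.elim fun W hW ↦ (h𝒞 hW).1.trans (subset_sUnion_of_mem hW),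
      sUnion_subset fun W hW ↦ (h𝒞 hW).2.1, conn_sUnion_le hA hne hch fun W hW ↦ (h𝒞 hW).2.2⟩,
      fun _ ↦ subset_sUnion_of_mem⟩) U₀ ⟨hAU₀, hU₀Y, hU₀.le⟩
  obtain ⟨hAU, hUY, hUc⟩ := hU.prop
  refine (connBtw_le_conn (fun x hx ↦ ?_) hUY).trans hUc
  obtain ⟨V, hxAV, hVY, hV⟩ := exists_conn_eq_connBtw (insert_subset (hX hx) (hAX.trans hX))
    (hXY.mono_left (insert_subset hx hAX))
  have hUV : conn M (U ∪ V) + c ≤ c + c :=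
    calc conn M (U ∪ V) + c ≤ conn M (U ∪ V) + conn M (U ∩ V) := by
          gcongr
          exact connBtw_le_conn (subset_inter hAU ((subset_insert x A).trans hxAV))
            (inter_subset_left.trans hUY)
      _ ≤ conn M U + conn M V :=
          conn_union_add_conn_inter_le (hUY.trans sdiff_subset) (hVY.trans sdiff_subset)
      _ ≤ c + c := add_le_add hUc (hV.trans_le (hins x hx))
  have hVU : V ⊆ U := subset_union_right.trans <| hU.2 ⟨hAU.trans subset_union_left,
    union_subset hUY hVY, (WithTop.add_le_add_iff_right hA).1 hUV⟩ subset_union_left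
  exact hVU (hxAV (mem_insert x A))

lemma exists_connBtw_insert_eq_add_one (hAX : A ⊆ X) (hX : X ⊆ M.E)
    (hXY : Disjoint X Y) (hA : connBtw M A Y ≠ ⊤) (hlt : connBtw M A Y < connBtw M X Y) :
    ∃ x ∈ X, connBtw M (insert x A) Y = connBtw M A Y + 1 := by
  by_contra! hne
  refine hlt.not_ge (connBtw_le_of_forall_insert_le hAX hX hXY hA fun x hx ↦ ?_)
  have hle := connBtw_insert_left_le (hAX.trans hX) (hXY.mono_left hAX) (hX hx)
    (disjoint_left.1 hXY hx)
  exact (ENat.lt_add_one_iff hA).1 (hle.lt_of_ne (hne x hx))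

lemma exists_connBtw_insert_eq {n : ℕ} (hn : n ≠ 0) (hAX : A ⊆ X)
    (hX : X ⊆ M.E) (hXY : Disjoint X Y) (hAn : connBtw M A Y ≤ n)
    (hnA : (n : ℕ∞) ≤ connBtw M A Y + 1) (hnX : n ≤ connBtw M X Y) :
    ∃ x ∈ X, connBtw M (insert x A) Y = n := by
  obtain hAn | hAn := hAn.eq_or_lt
  · obtain ⟨x, hx⟩ := Set.Nonempty.of_connBtw_ne_zero (hAn ▸ Nat.cast_ne_zero.2 hn)
    exact ⟨x, hAX hx, by rw [insert_eq_of_mem hx, hAn]⟩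
  · have hA : connBtw M A Y ≠ ⊤ := hAn.ne_top
    obtain ⟨x, hx, hxA⟩ := exists_connBtw_insert_eq_add_one hAX hX hXY hA (hAn.trans_le hnX)
    exact ⟨x, hx, hxA.trans (((ENat.add_one_le_iff hA).2 hAn).antisymm hnA)⟩

end

theorem stmt18 (M : Matroid α) (X Y X' Y' : Set α) (k : ℕ) (hk : 1 ≤ k)
    (hX : X ⊆ M.E) (hY : Y ⊆ M.E) (hXY : Disjoint X Y)
    (hX' : X' ⊆ X) (hY' : Y' ⊆ Y)
    (hprev : connBtw M X' Y' = ((k - 1 : ℕ) : ℕ∞)) :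
    ((k : ℕ∞) ≤ connBtw M X Y ↔
      ∃ x ∈ X, ∃ y ∈ Y, connBtw M (insert x X') (insert y Y') = (k : ℕ∞)) := by
  have hk0 : k ≠ 0 := by omega
  have hkc : (k : ℕ∞) = connBtw M X' Y' + 1 := by rw [hprev]; norm_cast; omega
  have hY'E : Y' ⊆ M.E := hY'.trans hY
  refine ⟨fun hXYk ↦ ?_, fun ⟨x, hx, y, hy, h⟩ ↦
    h ▸ connBtw_mono (insert_subset hx hX') (insert_subset hy hY')⟩
  obtain ⟨y, hyY, hy⟩ : ∃ y ∈ Y, (k : ℕ∞) ≤ connBtw M (insert y Y') X := by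
    by_cases hY'k : (k : ℕ∞) ≤ connBtw M Y' X
    · obtain ⟨y, hy⟩ :=
        Set.Nonempty.of_connBtw_ne_zero ((Nat.cast_pos.2 (by omega)).trans_le hY'k).ne'
      exact ⟨y, hY' hy, by rwa [insert_eq_of_mem hy]⟩
    · have hX'Y' : connBtw M X' Y' ≤ connBtw M Y' X :=
        (connBtw_mono hX' subset_rfl).trans_eq (connBtw_comm hX hY'E)
      obtain ⟨y, hyY, hy⟩ := exists_connBtw_insert_eq hk0 hY' hY hXY.symm (not_le.1 hY'k).le
        (hkc.trans_le (by gcongr)) (by rwa [← connBtw_comm hX hY])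
      exact ⟨y, hyY, hy.ge⟩
  rw [← connBtw_comm hX (insert_subset (hY hyY) hY'E)] at hy
  have hlo : connBtw M X' (insert y Y') ≤ k := hkc ▸ connBtw_insert_right_le (hX'.trans hX) hY'E
    (hXY.mono hX' hY') (hY hyY) (disjoint_right.1 (hXY.mono_left hX') hyY)
  have hhi : (k : ℕ∞) ≤ connBtw M X' (insert y Y') + 1 :=
    hkc.trans_le (by gcongr; exact connBtw_mono subset_rfl (subset_insert _ _))
  obtain ⟨x, hxX, hx⟩ := exists_connBtw_insert_eq hk0 hX' hX
    (hXY.mono_right (insert_subset hyY hY')) hlo hhi hy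
  exact ⟨x, hxX, y, hyY, hx⟩
end
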